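/- Let ρ_ABC be a positive-definite density matrix on H_A ⊗ H_B ⊗ H_C satisfying ρ_ABC = ρ_AB ρ_B^{-1} ρ_BC, with η_ABC, η_BC as usual and W the polar unitary with ρ_AB^{1/2} ρ_B^{-1/2} = d_B^{1/2} W η_AB^{1/2}. Then (1/d_B) ρ_AB^{-1/2} ρ_ABC ρ_AB^{-1/2} = W η_BC W*. In particular, W η_BC W* = η_BC holds if and only if (1/d_B) ρ_AB^{-1/2} ρ_ABC ρ_AB^{-1/2} = η_BC. -/

import Mathlib

open Matrix BigOperators
open scoped Kronecker ComplexOrder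

set_option linter.unusedSectionVars false

noncomputable section

namespace BSQMC

variable {A B C : Type*} [Fintype A] [Fintype B] [Fintype C]
  [DecidableEq A] [DecidableEq B] [DecidableEq C]

/-- Partial trace over the `A` system. -/
def ptA (M : Matrix (A × B × C) (A × B × C) ℂ) : Matrix (B × C) (B × C) ℂ :=
  Matrix.of fun p q => ∑ a : A, M (a, p) (a, q)

/-- Partial trace over the `C` system. -/
def ptC (M : Matrix (A × B × C) (A × B × C) ℂ) : Matrix (A × B) (A × B) ℂ :=
  Matrix.of fun p q => ∑ c : C, M (p.1, p.2, c) (q.1, q.2, c)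

/-- Partial trace over the `A` and `C` systems. -/
def ptAC (M : Matrix (A × B × C) (A × B × C) ℂ) : Matrix B B ℂ :=
  Matrix.of fun b b' => ∑ a : A, ∑ c : C, M (a, b, c) (a, b', c)

/-- `X_B ↦ I_A ⊗ X_B ⊗ I_C`. -/
def embB (X : Matrix B B ℂ) : Matrix (A × B × C) (A × B × C) ℂ :=
  Matrix.of fun p q =>
    (if p.1 = q.1 then (1 : ℂ) else 0) * X p.2.1 q.2.1 * (if p.2.2 = q.2.2 then 1 else 0)

/-- `X_{AB} ↦ X_{AB} ⊗ I_C`. -/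
def embAB (X : Matrix (A × B) (A × B) ℂ) : Matrix (A × B × C) (A × B × C) ℂ :=
  Matrix.of fun p q => X (p.1, p.2.1) (q.1, q.2.1) * (if p.2.2 = q.2.2 then (1 : ℂ) else 0)

/-- `X_{BC} ↦ I_A ⊗ X_{BC}`. -/
def embBC (X : Matrix (B × C) (B × C) ℂ) : Matrix (A × B × C) (A × B × C) ℂ :=
  Matrix.of fun p q => (if p.1 = q.1 then (1 : ℂ) else 0) * X p.2 q.2

/-- `X_B ↦ I_A ⊗ X_B` (on the `A × B` factor). -/
def embB2 (X : Matrix B B ℂ) : Matrix (A × B) (A × B) ℂ :=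
  Matrix.of fun p q => (if p.1 = q.1 then (1 : ℂ) else 0) * X p.2 q.2

/-- The positive semidefinite square root of a positive semidefinite matrix
(the definition `Matrix.PosSemidef.sqrt` of the older Mathlib, since removed). -/
noncomputable def _root_.Matrix.PosSemidef.sqrt {n 𝕜 : Type*} [Fintype n] [RCLike 𝕜]
    [DecidableEq n] {M : Matrix n n 𝕜} (hM : M.PosSemidef) : Matrix n n 𝕜 :=
  hM.1.eigenvectorUnitary.1 * diagonal ((↑) ∘ (hM.1.eigenvalues · |>.sqrt))
    * (star hM.1.eigenvectorUnitary : Matrix n n 𝕜)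

/-- `X_B ↦ X_B ⊗ I_C` (on the `B × C` factor). -/
def embB2C (X : Matrix B B ℂ) : Matrix (B × C) (B × C) ℂ :=
  Matrix.of fun p q => X p.1 q.1 * (if p.2 = q.2 then (1 : ℂ) else 0)

lemma embAB_mul (X Y : Matrix (A × B) (A × B) ℂ) :
    embAB (A := A) (B := B) (C := C) (X * Y) = embAB X * embAB Y := by
  ext ⟨a, b, c⟩ ⟨a', b', c'⟩
  simp only [embAB, Matrix.of_apply, Matrix.mul_apply, Fintype.sum_prod_type]
  simp [mul_ite, ite_mul, Finset.mul_sum, Finset.sum_mul, mul_comm, mul_assoc]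

lemma embAB_one : embAB (A := A) (B := B) (C := C) 1 = 1 := by
  ext ⟨a, b, c⟩ ⟨a', b', c'⟩
  simp only [embAB, Matrix.of_apply, Matrix.one_apply, Prod.mk.injEq, Prod.ext_iff]
  by_cases h1 : a = a' <;> by_cases h2 : b = b' <;> by_cases h3 : c = c' <;> simp [h1, h2, h3]

lemma embAB_conjTranspose (X : Matrix (A × B) (A × B) ℂ) :
    embAB (A := A) (B := B) (C := C) Xᴴ = (embAB X)ᴴ := by
  ext ⟨a, b, c⟩ ⟨a', b', c'⟩
  simp [embAB, Matrix.conjTranspose_apply, eq_comm, mul_comm, apply_ite (starRingEnd ℂ)]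

lemma embAB_smul (r : ℂ) (X : Matrix (A × B) (A × B) ℂ) :
    embAB (A := A) (B := B) (C := C) (r • X) = r • embAB X := by
  ext ⟨a, b, c⟩ ⟨a', b', c'⟩
  simp [embAB, mul_assoc]

lemma embBC_mul (X Y : Matrix (B × C) (B × C) ℂ) :
    embBC (A := A) (B := B) (C := C) (X * Y) = embBC X * embBC Y := by
  ext ⟨a, b, c⟩ ⟨a', b', c'⟩
  simp only [embBC, Matrix.of_apply, Matrix.mul_apply, Fintype.sum_prod_type]
  simp [mul_ite, ite_mul, Finset.mul_sum, Finset.sum_mul, mul_comm, mul_assoc]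

lemma embBC_one : embBC (A := A) (B := B) (C := C) 1 = 1 := by
  ext ⟨a, b, c⟩ ⟨a', b', c'⟩
  simp only [embBC, Matrix.of_apply, Matrix.one_apply, Prod.mk.injEq, Prod.ext_iff]
  by_cases h1 : a = a' <;> by_cases h2 : b = b' <;> by_cases h3 : c = c' <;> simp [h1, h2, h3]

lemma embBC_conjTranspose (X : Matrix (B × C) (B × C) ℂ) :
    embBC (A := A) (B := B) (C := C) Xᴴ = (embBC X)ᴴ := by
  ext ⟨a, b, c⟩ ⟨a', b', c'⟩
  simp [embBC, Matrix.conjTranspose_apply, eq_comm, mul_comm, apply_ite (starRingEnd ℂ)]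

lemma embBC_smul (r : ℂ) (X : Matrix (B × C) (B × C) ℂ) :
    embBC (A := A) (B := B) (C := C) (r • X) = r • embBC X := by
  ext ⟨a, b, c⟩ ⟨a', b', c'⟩
  simp [embBC, mul_ite]

lemma embB2_mul (X Y : Matrix B B ℂ) :
    embB2 (A := A) (X * Y) = embB2 X * embB2 Y := by
  ext ⟨a, b⟩ ⟨a', b'⟩
  simp only [embB2, Matrix.of_apply, Matrix.mul_apply, Fintype.sum_prod_type]
  simp [mul_ite, ite_mul, Finset.mul_sum, Finset.sum_mul, mul_comm, mul_assoc]

lemma embB2_one : embB2 (A := A) (B := B) 1 = 1 := by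
  ext ⟨a, b⟩ ⟨a', b'⟩
  simp only [embB2, Matrix.of_apply, Matrix.one_apply, Prod.mk.injEq, Prod.ext_iff]
  by_cases h1 : a = a' <;> by_cases h2 : b = b' <;> simp [h1, h2]

lemma embB2_conjTranspose (X : Matrix B B ℂ) :
    embB2 (A := A) Xᴴ = (embB2 X)ᴴ := by
  ext ⟨a, b⟩ ⟨a', b'⟩
  simp [embB2, Matrix.conjTranspose_apply, eq_comm, mul_comm, apply_ite (starRingEnd ℂ)]

lemma embB2C_mul (X Y : Matrix B B ℂ) :
    embB2C (C := C) (X * Y) = embB2C X * embB2C Y := by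
  ext ⟨b, c⟩ ⟨b', c'⟩
  simp only [embB2C, Matrix.of_apply, Matrix.mul_apply, Fintype.sum_prod_type]
  simp [mul_ite, ite_mul, Finset.mul_sum, Finset.sum_mul, mul_comm, mul_assoc]

lemma embB2C_one : embB2C (B := B) (C := C) 1 = 1 := by
  ext ⟨b, c⟩ ⟨b', c'⟩
  simp only [embB2C, Matrix.of_apply, Matrix.one_apply, Prod.mk.injEq, Prod.ext_iff]
  by_cases h1 : b = b' <;> by_cases h2 : c = c' <;> simp [h1, h2]

lemma embB2C_conjTranspose (X : Matrix B B ℂ) :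
    embB2C (C := C) Xᴴ = (embB2C X)ᴴ := by
  ext ⟨b, c⟩ ⟨b', c'⟩
  simp [embB2C, Matrix.conjTranspose_apply, eq_comm, mul_comm, apply_ite (starRingEnd ℂ)]

lemma embB_eq_embAB (X : Matrix B B ℂ) :
    embB (A := A) (B := B) (C := C) X = embAB (embB2 X) := by
  ext ⟨a, b, c⟩ ⟨a', b', c'⟩
  by_cases h1 : a = a' <;> by_cases h2 : c = c' <;> simp [embB, embAB, embB2, h1, h2, mul_comm]

lemma embB_eq_embBC (X : Matrix B B ℂ) :
    embB (A := A) (B := B) (C := C) X = embBC (embB2C X) := by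
  ext ⟨a, b, c⟩ ⟨a', b', c'⟩
  by_cases h1 : a = a' <;> by_cases h2 : c = c' <;> simp [embB, embBC, embB2C, h1, h2, mul_comm]

lemma ptC_embAB_mul (P : Matrix (A × B) (A × B) ℂ) (M : Matrix (A × B × C) (A × B × C) ℂ) :
    ptC (embAB P * M) = P * ptC M := by
  ext ⟨a, b⟩ ⟨a', b'⟩
  simp only [ptC, embAB, Matrix.of_apply, Matrix.mul_apply, Fintype.sum_prod_type]
  rw [Finset.sum_comm]
  simp [ite_mul, Finset.mul_sum, Finset.sum_mul]
  exact Finset.sum_congr rfl fun a₂ _ => Finset.sum_comm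

lemma ptC_mul_embAB (M : Matrix (A × B × C) (A × B × C) ℂ) (Q : Matrix (A × B) (A × B) ℂ) :
    ptC (M * embAB Q) = ptC M * Q := by
  ext ⟨a, b⟩ ⟨a', b'⟩
  simp only [ptC, embAB, Matrix.of_apply, Matrix.mul_apply, Fintype.sum_prod_type]
  rw [Finset.sum_comm]
  simp [mul_ite, Finset.mul_sum, Finset.sum_mul]
  exact Finset.sum_congr rfl fun a₂ _ => Finset.sum_comm

lemma ptA_embBC_mul (P : Matrix (B × C) (B × C) ℂ) (M : Matrix (A × B × C) (A × B × C) ℂ) :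
    ptA (embBC P * M) = P * ptA M := by
  ext ⟨b, c⟩ ⟨b', c'⟩
  simp only [ptA, embBC, Matrix.of_apply, Matrix.mul_apply, Fintype.sum_prod_type]
  rw [Finset.sum_comm]
  simp [ite_mul, Finset.mul_sum, Finset.sum_mul]
  exact (Finset.sum_comm (f := fun x y => _)).trans
    (Finset.sum_congr rfl fun b₂ _ => Finset.sum_comm)

lemma ptA_mul_embBC (M : Matrix (A × B × C) (A × B × C) ℂ) (Q : Matrix (B × C) (B × C) ℂ) :
    ptA (M * embBC Q) = ptA M * Q := by
  ext ⟨b, c⟩ ⟨b', c'⟩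
  simp only [ptA, embBC, Matrix.of_apply, Matrix.mul_apply, Fintype.sum_prod_type]
  rw [Finset.sum_comm]
  simp [mul_ite, Finset.mul_sum, Finset.sum_mul]
  exact (Finset.sum_comm (f := fun x y => _)).trans
    (Finset.sum_congr rfl fun b₂ _ => Finset.sum_comm)

lemma ptC_smul (r : ℂ) (M : Matrix (A × B × C) (A × B × C) ℂ) : ptC (r • M) = r • ptC M := by
  ext ⟨a, b⟩ ⟨a', b'⟩
  simp [ptC, Finset.mul_sum]

lemma ptA_smul (r : ℂ) (M : Matrix (A × B × C) (A × B × C) ℂ) : ptA (r • M) = r • ptA M := by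
  ext ⟨b, c⟩ ⟨b', c'⟩
  simp [ptA, Finset.mul_sum]

lemma ptA_conjTranspose (M : Matrix (A × B × C) (A × B × C) ℂ) : (ptA M)ᴴ = ptA Mᴴ := by
  ext ⟨b, c⟩ ⟨b', c'⟩
  simp [ptA, Matrix.conjTranspose_apply, map_sum]

lemma embB_mul (X Y : Matrix B B ℂ) :
    embB (A := A) (B := B) (C := C) (X * Y) = embB X * embB Y := by
  rw [embB_eq_embAB, embB_eq_embAB, embB_eq_embAB, embB2_mul, embAB_mul]

lemma embB_one : embB (A := A) (B := B) (C := C) 1 = 1 := by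
  rw [embB_eq_embAB, embB2_one, embAB_one]

open scoped MatrixOrder in
lemma _root_.Matrix.PosSemidef.sqrt_eq_cfcSqrt {n : Type*} [Fintype n] [DecidableEq n]
    {M : Matrix n n ℂ} (hM : M.PosSemidef) : hM.sqrt = CFC.sqrt M := by
  rw [CFC.sqrt_eq_cfc, cfc_nnreal_eq_real _ M hM.nonneg, hM.1.cfc_eq]
  have hf : (fun x : ℝ => ((NNReal.sqrt x.toNNReal : NNReal) : ℝ)) = Real.sqrt := by
    funext x; rw [Real.sqrt]
  rw [hf, IsHermitian.cfc, Unitary.conjStarAlgAut_apply]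
  rfl

open scoped MatrixOrder in
lemma _root_.Matrix.PosSemidef.posSemidef_sqrt {n : Type*} [Fintype n] [DecidableEq n]
    {M : Matrix n n ℂ} (hM : M.PosSemidef) : hM.sqrt.PosSemidef := by
  rw [hM.sqrt_eq_cfcSqrt]
  exact Matrix.nonneg_iff_posSemidef.mp (CFC.sqrt_nonneg M)

open scoped MatrixOrder in
lemma _root_.Matrix.PosSemidef.sqrt_mul_self {n : Type*} [Fintype n] [DecidableEq n]
    {M : Matrix n n ℂ} (hM : M.PosSemidef) : hM.sqrt * hM.sqrt = M := by
  rw [hM.sqrt_eq_cfcSqrt]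
  exact CFC.sqrt_mul_sqrt_self M hM.nonneg

open scoped MatrixOrder in
lemma _root_.Matrix.PosSemidef.eq_sqrt_of_sq_eq {n : Type*} [Fintype n] [DecidableEq n]
    {P M : Matrix n n ℂ} (hP : P.PosSemidef) (hM : M.PosSemidef) (h : P ^ 2 = M) :
    P = hM.sqrt := by
  rw [hM.sqrt_eq_cfcSqrt]
  exact (CFC.sqrt_unique (by rw [← sq]; exact h) hP.nonneg).symm

lemma commute_posSemidef_sqrt {n : Type*} [Fintype n] [DecidableEq n]
    {M Z : Matrix n n ℂ} (hM : M.PosSemidef) (h : Z * M = M * Z) :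
    Z * hM.sqrt = hM.sqrt * Z := by
  set U : Matrix n n ℂ := (hM.1.eigenvectorUnitary : Matrix n n ℂ) with hU
  have hU1 : star U * U = 1 := Matrix.mem_unitaryGroup_iff'.mp hM.1.eigenvectorUnitary.2
  have hU2 : U * star U = 1 := Matrix.mem_unitaryGroup_iff.mp hM.1.eigenvectorUnitary.2
  set lam := hM.1.eigenvalues with hlam
  set D : Matrix n n ℂ := Matrix.diagonal (RCLike.ofReal ∘ lam) with hD
  set D' : Matrix n n ℂ := Matrix.diagonal ((↑) ∘ Real.sqrt ∘ lam) with hD'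
  have hspec : M = U * D * star U := hM.1.spectral_theorem
  set Z' := star U * Z * U with hZ'
  have e1 : Z' * D = star U * (Z * M) * U := by
    rw [hspec, hZ']; simp only [mul_assoc, hU1, mul_one]
  have e2 : D * Z' = star U * (M * Z) * U := by
    rw [hspec, hZ']; simp only [← mul_assoc, hU1, one_mul]
  have hcomm : Z' * D = D * Z' := by rw [e1, h, ← e2]
  have hcomm' : Z' * D' = D' * Z' := by
    ext i j
    have hij := congrFun (congrFun hcomm i) j
    simp only [hD, Matrix.mul_diagonal, Matrix.diagonal_mul, Function.comp_apply] at hij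
    simp only [hD', Matrix.mul_diagonal, Matrix.diagonal_mul, Function.comp_apply]
    rcases eq_or_ne (lam i) (lam j) with he | he
    · rw [he, mul_comm]
    · have h2 : Z' i j * ((RCLike.ofReal (lam j) : ℂ) - RCLike.ofReal (lam i)) = 0 := by
        linear_combination hij
      rcases mul_eq_zero.mp h2 with h3 | h3
      · simp [h3]
      · exfalso; apply he
        have h4 := sub_eq_zero.mp h3
        exact (RCLike.ofReal_inj.mp h4).symm
  have hsq : hM.sqrt = U * D' * star U := rfl
  have hZdecomp : U * Z' * star U = Z := by
    rw [hZ']; simp only [← mul_assoc, hU2, one_mul]; rw [mul_assoc, hU2, mul_one]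
  have f1 : (U * Z' * star U) * (U * D' * star U) = U * (Z' * D') * star U := by
    simp only [← mul_assoc]
    rw [mul_assoc (U * Z') (star U) U, hU1, mul_one]
  have f2 : (U * D' * star U) * (U * Z' * star U) = U * (D' * Z') * star U := by
    simp only [← mul_assoc]
    rw [mul_assoc (U * D') (star U) U, hU1, mul_one]
  rw [hsq, ← hZdecomp, f1, f2, hcomm']

lemma posDef_sqrt_isUnit_det {n : Type*} [Fintype n] [DecidableEq n]
    {M : Matrix n n ℂ} (hM : M.PosDef) : IsUnit hM.posSemidef.sqrt.det := by
  have h1 : hM.posSemidef.sqrt.det * hM.posSemidef.sqrt.det = M.det := by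
    rw [← Matrix.det_mul, Matrix.PosSemidef.sqrt_mul_self]
  rw [isUnit_iff_ne_zero]
  intro h
  rw [h, mul_zero] at h1
  exact hM.det_pos.ne' h1.symm

theorem conjugated_state_eq_W_eta_bc
    (ρ : Matrix (A × B × C) (A × B × C) ℂ)
    (hρ : ρ.PosDef) (htr : ρ.trace = 1)
    (hB : (ptAC ρ).PosDef) (hABpd : (ptC ρ).PosDef)
    (hrec : ρ = embAB (ptC ρ) * embB (ptAC ρ)⁻¹ * embBC (ptA ρ))
    (η : Matrix (A × B × C) (A × B × C) ℂ)
    (hη : η = (Fintype.card B : ℂ)⁻¹ •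
      (embB hB.inv.posSemidef.sqrt * ρ * embB hB.inv.posSemidef.sqrt))
    (hηAB : (ptC η).PosSemidef)
    (W : Matrix (A × B) (A × B) ℂ)
    (hW : W ∈ Matrix.unitaryGroup (A × B) ℂ)
    (hpolar : hABpd.posSemidef.sqrt * embB2 hB.inv.posSemidef.sqrt =
      ((Real.sqrt (Fintype.card B) : ℂ)) • (W * hηAB.sqrt)) :
    (Fintype.card B : ℂ)⁻¹ •
        (embAB hABpd.inv.posSemidef.sqrt * ρ * embAB hABpd.inv.posSemidef.sqrt) =
      embAB W * embBC (ptA η) * (embAB W)ᴴ ∧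
    (embAB W * embBC (ptA η) * (embAB W)ᴴ = embBC (ptA η) ↔
      (Fintype.card B : ℂ)⁻¹ •
          (embAB hABpd.inv.posSemidef.sqrt * ρ * embAB hABpd.inv.posSemidef.sqrt) =
        embBC (ptA η)) := by
  -- nonemptiness and nonzero dimension
  have hne : Nonempty (A × B × C) := by
    by_contra hc
    rw [not_nonempty_iff] at hc
    have h0 : ρ.trace = 0 := by
      simp [Matrix.trace, Finset.univ_eq_empty]
    rw [htr] at h0
    exact one_ne_zero h0
  haveI : Nonempty B := ⟨(Classical.arbitrary (A × B × C)).2.1⟩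
  set d : ℂ := (Fintype.card B : ℂ) with hd_def
  have hd : d ≠ 0 := Nat.cast_ne_zero.mpr Fintype.card_ne_zero
  set s : ℂ := ((Real.sqrt (Fintype.card B) : ℝ) : ℂ) with hs_def
  have hs : s * s = d := by
    rw [hs_def, ← Complex.ofReal_mul, Real.mul_self_sqrt (Nat.cast_nonneg _)]
    simp [hd_def]
  have hs0 : s ≠ 0 := by
    intro h
    apply hd
    rw [← hs, h, mul_zero]
  -- abbreviations
  set T := hB.inv.posSemidef.sqrt with hT_def
  set R := hABpd.posSemidef.sqrt with hR_def
  set S := hABpd.inv.posSemidef.sqrt with hS_def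
  set K := hηAB.sqrt with hK_def
  have hTh : Tᴴ = T := hB.inv.posSemidef.posSemidef_sqrt.1
  have hRh : Rᴴ = R := hABpd.posSemidef.posSemidef_sqrt.1
  have hSh : Sᴴ = S := hABpd.inv.posSemidef.posSemidef_sqrt.1
  have hKh : Kᴴ = K := hηAB.posSemidef_sqrt.1
  have hTT : T * T = (ptAC ρ)⁻¹ := hB.inv.posSemidef.sqrt_mul_self
  have hRR : R * R = ptC ρ := hABpd.posSemidef.sqrt_mul_self
  have hKK : K * K = ptC η := hηAB.sqrt_mul_self
  -- invertibility
  have hTdet : IsUnit T.det := posDef_sqrt_isUnit_det hB.inv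
  have hRdet : IsUnit R.det := posDef_sqrt_isUnit_det hABpd
  have hTinv : T * T⁻¹ = 1 := Matrix.mul_nonsing_inv _ hTdet
  have hTinv' : T⁻¹ * T = 1 := Matrix.nonsing_inv_mul _ hTdet
  -- S = R⁻¹
  have hSR : S = R⁻¹ := by
    have h1 : (R⁻¹).PosSemidef := hABpd.posSemidef.posSemidef_sqrt.inv
    have h2 : (R⁻¹) ^ 2 = (ptC ρ)⁻¹ := by
      rw [pow_two, ← Matrix.mul_inv_rev, hRR]
    exact (Matrix.PosSemidef.eq_sqrt_of_sq_eq h1 hABpd.inv.posSemidef h2).symm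
  -- embB2 T inverse
  have hPinv : (embB2 T : Matrix (A × B) (A × B) ℂ)⁻¹ = embB2 T⁻¹ :=
    Matrix.inv_eq_left_inv (by rw [← embB2_mul, hTinv', embB2_one])
  -- partial traces of η
  have hetaAB : ptC η = d⁻¹ • (embB2 T * ptC ρ * embB2 T) := by
    rw [hη, embB_eq_embAB, ptC_smul, ptC_mul_embAB, ptC_embAB_mul]
  have hetaBC : ptA η = d⁻¹ • (embB2C T * ptA ρ * embB2C T) := by
    rw [hη, embB_eq_embBC, ptA_smul, ptA_mul_embBC, ptA_embBC_mul]
  -- the big identity: embB T * ρ * embB T = d • η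
  have hbig : embB T * ρ * embB T = d • η := by
    rw [hη, smul_smul, mul_inv_cancel₀ hd, one_smul]
  -- Step C : embAB (C := C) (ptC η) * embBC (A := A) (ptA η) = d⁻¹ • η
  have hC : embAB (C := C) (ptC η) * embBC (A := A) (ptA η) = d⁻¹ • η := by
    rw [hetaAB, hetaBC, embAB_smul, embBC_smul, embAB_mul, embAB_mul, embBC_mul, embBC_mul,
      ← embB_eq_embAB, ← embB_eq_embBC, smul_mul_assoc, mul_smul_comm, smul_smul]
    have hmid : embB (A := A) (B := B) (C := C) T * embAB (C := C) (ptC ρ) * embB T *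
        (embB T * embBC (A := A) (ptA ρ) * embB T) =
        embB T * ρ * embB T := by
      calc embB (A := A) (B := B) (C := C) T * embAB (C := C) (ptC ρ) * embB T *
            (embB T * embBC (A := A) (ptA ρ) * embB T)
          = embB T * (embAB (C := C) (ptC ρ) * (embB T * embB T) * embBC (A := A) (ptA ρ)) * embB T := by
            simp only [mul_assoc]
        _ = embB T * (embAB (C := C) (ptC ρ) * embB (ptAC ρ)⁻¹ * embBC (A := A) (ptA ρ)) * embB T := by
            rw [← embB_mul, hTT]
        _ = embB T * ρ * embB T := by rw [← hrec]
    rw [hmid, hbig, smul_smul]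
    congr 1
    field_simp
  -- η is Hermitian
  have hembBTh : (embB (A := A) (B := B) (C := C) T)ᴴ = embB T := by
    rw [embB_eq_embAB, ← embAB_conjTranspose, ← embB2_conjTranspose, hTh]
  have hηherm : ηᴴ = η := by
    rw [hη]
    rw [Matrix.conjTranspose_smul, Matrix.conjTranspose_mul, Matrix.conjTranspose_mul,
      hembBTh, hρ.1.eq]
    congr 1
    · simp [hd_def]
    · simp [mul_assoc]
  -- Hermitian properties of the embedded factors
  have hXh : (embAB (C := C) (ptC η))ᴴ = embAB (C := C) (ptC η) := by
    rw [← embAB_conjTranspose]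
    exact congrArg embAB hηAB.1
  have hYh : (embBC (A := A) (ptA η))ᴴ = embBC (A := A) (ptA η) := by
    rw [← embBC_conjTranspose, ptA_conjTranspose, hηherm]
  -- commutation of embAB (C := C) (ptC η) and embBC (A := A) (ptA η)
  have hcommE : embBC (A := A) (ptA η) * embAB (C := C) (ptC η) = embAB (C := C) (ptC η) * embBC (A := A) (ptA η) := by
    have h1 : (embAB (C := C) (ptC η) * embBC (A := A) (ptA η))ᴴ = embAB (C := C) (ptC η) * embBC (A := A) (ptA η) := by
      rw [hC, Matrix.conjTranspose_smul, hηherm]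
      congr 1
      simp [hd_def]
    have h2 : (embAB (C := C) (ptC η) * embBC (A := A) (ptA η))ᴴ =
        embBC (A := A) (ptA η) * embAB (C := C) (ptC η) := by
      rw [Matrix.conjTranspose_mul, hXh, hYh]
    rw [← h2, h1]
  -- embedded K facts
  have hembX_eq : embAB (C := C) (ptC η) = embAB (C := C) K * embAB (C := C) K := by
    rw [← embAB_mul, hKK]
  have hembKpsd : (embAB (C := C) K).PosSemidef := by
    have hL := hηAB.posSemidef_sqrt
    have hKL : embAB (C := C) K = (embAB (C := C) hL.sqrt)ᴴ * embAB (C := C) hL.sqrt := by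
      rw [← embAB_conjTranspose, hL.posSemidef_sqrt.1, ← embAB_mul, hL.sqrt_mul_self]
    rw [hKL]
    exact Matrix.posSemidef_conjTranspose_mul_self _
  have hEABpsd : (embAB (C := C) (ptC η)).PosSemidef := by
    have hXK : embAB (C := C) (ptC η) = (embAB (C := C) K)ᴴ * embAB (C := C) K := by
      rw [← embAB_conjTranspose, hKh, ← embAB_mul, hKK]
    rw [hXK]
    exact Matrix.posSemidef_conjTranspose_mul_self _
  have hsqrtemb : hEABpsd.sqrt = embAB (C := C) K :=
    (Matrix.PosSemidef.eq_sqrt_of_sq_eq hembKpsd hEABpsd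
      (by rw [pow_two, ← embAB_mul, hKK])).symm
  have hF : embBC (A := A) (ptA η) * embAB (C := C) K =
      embAB (C := C) K * embBC (A := A) (ptA η) := by
    have h3 := commute_posSemidef_sqrt hEABpsd hcommE
    rwa [hsqrtemb] at h3
  -- invertibility of ptC η and K
  have hdetP : IsUnit (embB2 (A := A) T).det :=
    Matrix.isUnit_det_of_left_inverse (by rw [← embB2_mul, hTinv', embB2_one])
  have hdetηAB : IsUnit (ptC η).det := by
    rw [hetaAB, Matrix.det_smul, Matrix.det_mul, Matrix.det_mul, isUnit_iff_ne_zero]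
    refine mul_ne_zero (pow_ne_zero _ (inv_ne_zero hd)) ?_
    exact mul_ne_zero (mul_ne_zero (isUnit_iff_ne_zero.mp hdetP) hABpd.det_pos.ne')
      (isUnit_iff_ne_zero.mp hdetP)
  have hKdet : IsUnit K.det := by
    rw [isUnit_iff_ne_zero]
    intro h0
    apply isUnit_iff_ne_zero.mp hdetηAB
    rw [← hKK, Matrix.det_mul, h0, mul_zero]
  have hKinv : K * K⁻¹ = 1 := Matrix.mul_nonsing_inv _ hKdet
  have hKinv' : K⁻¹ * K = 1 := Matrix.nonsing_inv_mul _ hKdet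
  have hKinvh : (K⁻¹)ᴴ = K⁻¹ := by rw [Matrix.conjTranspose_nonsing_inv, hKh]
  -- polar consequences
  have hWW : W * Wᴴ = 1 := by
    have h4 := Matrix.mem_unitaryGroup_iff.mp hW
    rwa [Matrix.star_eq_conjTranspose] at h4
  have hright : (R * embB2 T) * (s⁻¹ • (K⁻¹ * Wᴴ)) = 1 := by
    rw [hpolar, Matrix.smul_mul, Matrix.mul_smul, smul_smul, mul_inv_cancel₀ hs0, one_smul]
    calc W * K * (K⁻¹ * Wᴴ) = W * (K * K⁻¹) * Wᴴ := by simp only [mul_assoc]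
      _ = 1 := by rw [hKinv, mul_one, hWW]
  have hG2 : (embB2 (A := A) T)⁻¹ * S = s⁻¹ • (K⁻¹ * Wᴴ) := by
    rw [hSR, ← Matrix.mul_inv_rev]
    exact Matrix.inv_eq_right_inv hright
  have hPh : (embB2 (A := A) T)ᴴ = embB2 T := by rw [← embB2_conjTranspose, hTh]
  have hstars : star s = s := by rw [hs_def]; exact Complex.conj_ofReal _
  have hG1 : S * (embB2 (A := A) T)⁻¹ = s⁻¹ • (W * K⁻¹) := by
    have h4 := congrArg Matrix.conjTranspose hG2
    rw [Matrix.conjTranspose_mul, hSh, Matrix.conjTranspose_nonsing_inv, hPh,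
      Matrix.conjTranspose_smul, Matrix.conjTranspose_mul, hKinvh,
      Matrix.conjTranspose_conjTranspose] at h4
    rw [h4]
    congr 1
    rw [star_inv₀, hstars]
  -- expression for ρ
  have h7 : η = d • (embAB (C := C) (ptC η) * embBC (A := A) (ptA η)) := by
    rw [hC, smul_smul, mul_inv_cancel₀ hd, one_smul]
  have hρeq : ρ = (d * d) • (embAB (C := C) (embB2 T⁻¹) *
      (embAB (C := C) (ptC η) * embBC (A := A) (ptA η)) * embAB (C := C) (embB2 T⁻¹)) := by
    have h5 : embB (A := A) (C := C) T⁻¹ * (embB T * ρ * embB T) * embB T⁻¹ = ρ := by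
      calc embB (A := A) (C := C) T⁻¹ * (embB T * ρ * embB T) * embB T⁻¹
          = (embB T⁻¹ * embB T) * ρ * (embB T * embB T⁻¹) := by simp only [mul_assoc]
        _ = ρ := by rw [← embB_mul, ← embB_mul, hTinv, hTinv', embB_one, one_mul, mul_one]
    have h6 : ρ = embB (A := A) (C := C) T⁻¹ * (d • η) * embB T⁻¹ := by
      rw [← hbig, h5]
    rw [h6, embB_eq_embAB]
    conv_lhs => rw [h7]
    simp only [Matrix.mul_smul, Matrix.smul_mul, smul_smul]
  -- core computation
  have hWKK : W * K⁻¹ * (K * K) = W * K := by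
    rw [mul_assoc, ← mul_assoc K⁻¹ K K, hKinv', one_mul]
  have hKKW : K * (K⁻¹ * Wᴴ) = Wᴴ := by
    rw [← mul_assoc, hKinv, one_mul]
  have hq1 : embAB (C := C) S * embAB (C := C) (embB2 T⁻¹) =
      s⁻¹ • embAB (C := C) (W * K⁻¹) := by
    rw [← embAB_mul, ← hPinv, hG1, embAB_smul]
  have hq2 : embAB (C := C) (embB2 T⁻¹) * embAB (C := C) S =
      s⁻¹ • embAB (C := C) (K⁻¹ * Wᴴ) := by
    rw [← embAB_mul, ← hPinv, hG2, embAB_smul]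
  have hcore : embAB (C := C) S * (embAB (C := C) (embB2 T⁻¹) *
        (embAB (C := C) (ptC η) * embBC (A := A) (ptA η)) * embAB (C := C) (embB2 T⁻¹)) *
        embAB (C := C) S =
      (s⁻¹ * s⁻¹) • (embAB W * embBC (A := A) (ptA η) * (embAB (C := C) W)ᴴ) := by
    calc embAB (C := C) S * (embAB (C := C) (embB2 T⁻¹) *
          (embAB (C := C) (ptC η) * embBC (A := A) (ptA η)) * embAB (C := C) (embB2 T⁻¹)) *
          embAB (C := C) S
        = (embAB (C := C) S * embAB (C := C) (embB2 T⁻¹)) *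
            (embAB (C := C) (ptC η) * embBC (A := A) (ptA η)) *
            (embAB (C := C) (embB2 T⁻¹) * embAB (C := C) S) := by
          simp only [mul_assoc]
      _ = (s⁻¹ • embAB (C := C) (W * K⁻¹)) *
            (embAB (C := C) (ptC η) * embBC (A := A) (ptA η)) *
            (s⁻¹ • embAB (C := C) (K⁻¹ * Wᴴ)) := by rw [hq1, hq2]
      _ = (s⁻¹ * s⁻¹) • (embAB (C := C) (W * K⁻¹) *
            (embAB (C := C) (ptC η) * embBC (A := A) (ptA η)) *
            embAB (C := C) (K⁻¹ * Wᴴ)) := by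
          simp only [Matrix.smul_mul, Matrix.mul_smul, smul_smul]
      _ = (s⁻¹ * s⁻¹) • (embAB W * embBC (A := A) (ptA η) * (embAB (C := C) W)ᴴ) := by
          refine congrArg ((s⁻¹ * s⁻¹) • ·) ?_
          rw [hembX_eq]
          have e1 : embAB (C := C) (W * K⁻¹) * (embAB (C := C) K * embAB (C := C) K) =
              embAB (C := C) (W * K) := by
            rw [← embAB_mul, ← embAB_mul, hWKK]
          have e2 : embAB (C := C) K * embAB (C := C) (K⁻¹ * Wᴴ) = (embAB (C := C) W)ᴴ := by
            rw [← embAB_mul, hKKW, embAB_conjTranspose]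
          calc embAB (C := C) (W * K⁻¹) *
                (embAB (C := C) K * embAB (C := C) K * embBC (A := A) (ptA η)) *
                embAB (C := C) (K⁻¹ * Wᴴ)
              = (embAB (C := C) (W * K⁻¹) * (embAB (C := C) K * embAB (C := C) K)) *
                  embBC (A := A) (ptA η) * embAB (C := C) (K⁻¹ * Wᴴ) := by
                simp only [mul_assoc]
            _ = embAB (C := C) W * (embAB (C := C) K * embBC (A := A) (ptA η)) *
                  embAB (C := C) (K⁻¹ * Wᴴ) := by
                rw [e1, embAB_mul]
                simp only [mul_assoc]
            _ = embAB (C := C) W * (embBC (A := A) (ptA η) * embAB (C := C) K) *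
                  embAB (C := C) (K⁻¹ * Wᴴ) := by rw [hF]
            _ = embAB (C := C) W * embBC (A := A) (ptA η) *
                  (embAB (C := C) K * embAB (C := C) (K⁻¹ * Wᴴ)) := by
                simp only [mul_assoc]
            _ = embAB W * embBC (A := A) (ptA η) * (embAB (C := C) W)ᴴ := by rw [e2]
  -- final assembly
  have hscal : d⁻¹ * (d * d) * (s⁻¹ * s⁻¹) = 1 := by
    rw [← hs]
    field_simp
  have hmain : d⁻¹ • (embAB (C := C) S * ρ * embAB (C := C) S) =
      embAB W * embBC (A := A) (ptA η) * (embAB (C := C) W)ᴴ := by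
    rw [hρeq, Matrix.mul_smul, Matrix.smul_mul, smul_smul, hcore, smul_smul, hscal, one_smul]
  exact ⟨hmain, ⟨fun h => hmain.trans h, fun h => hmain.symm.trans h⟩⟩

end BSQMC
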